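/- Let $I$ be a subarc of $\mathbb{T}$ and let $N \in \mathbb{N}$ satisfy $2^{-N} \le |I| < 2^{-N+1}$. Then there is a universal constant $C$ such that for all integers $2 \le k \le N$, the Lebesgue measure of the set of parameters $\theta \in [0,1]$ for which the smallest interval of the translated dyadic grid $\mathcal{D}(\theta)$ containing $I$ has length exactly $2^{k-N}$ is at most $C \cdot 2^{-k}$. -/

import Mathlib

open MeasureTheory ENNReal Classical

noncomputable section

/-- The open unit disc in `ℂ`. -/
def unitDisc : Set ℂ := {z | ‖z‖ < 1}

/-- Normalized area measure on `ℂ`. -/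
def areaM : Measure ℂ := (ENNReal.ofReal Real.pi)⁻¹ • (volume : Measure ℂ)

/-- The point `e^{2πit}` of the unit circle (arc length normalized to 1). -/
def circlePoint (t : ℝ) : ℂ := Complex.exp (2 * Real.pi * t * Complex.I)

/-- An arc of the circle, given by its starting angle and its (normalized) length. -/
structure Arc where
  start : ℝ
  len : ℝ

/-- Membership of a point of the circle in an arc. -/
def arcMem (I : Arc) (w : ℂ) : Prop :=
  ∃ t : ℝ, I.start ≤ t ∧ t < I.start + I.len ∧ w = circlePoint t

/-- The Carleson square of an arc. -/
def carleson (I : Arc) : Set ℂ :=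
  {z | z ≠ 0 ∧ ‖z‖ < 1 ∧ 1 - ‖z‖ < I.len ∧ arcMem I (z / (‖z‖ : ℂ))}

/-- The `ρ`-top half `T_ρ(I)` of the Carleson square of `I`. -/
def topHalfρ (ρ : ℝ) (I : Arc) : Set ℂ :=
  {z | z ≠ 0 ∧ 1 - ρ < (1 - ‖z‖) / I.len ∧ (1 - ‖z‖) / I.len ≤ 1 ∧ arcMem I (z / (‖z‖ : ℂ))}

/-- `I` is contained in `J` as arcs of the circle. -/
def arcSub (I J : Arc) : Prop := ∀ w : ℂ, arcMem I w → arcMem J w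

/-- The translated dyadic grid `𝒟(θ)` of arcs, with normalized lengths `2^{-n}`. -/
def gridArcs (θ : ℝ) : Set Arc :=
  {I | ∃ n k : ℕ, k < 2 ^ n ∧ I = ⟨θ + (k : ℝ) / 2 ^ n, 1 / 2 ^ n⟩}

/-- The arc `𝓘^θ_z` of `𝒟(θ)` whose (dyadic) top half contains `z`. -/
def topArc (θ : ℝ) (z : ℂ) : Arc :=
  if h : ∃ I, I ∈ gridArcs θ ∧ z ∈ topHalfρ (1/2) I then h.choose else ⟨θ, 1⟩

/-- The smallest arc of `𝒟(θ)` containing both arcs `I` and `J`. -/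
def minCover (θ : ℝ) (I J : Arc) : Arc :=
  if h : ∃ P, P ∈ gridArcs θ ∧ arcSub I P ∧ arcSub J P ∧
      ∀ Q ∈ gridArcs θ, arcSub I Q → arcSub J Q → P.len ≤ Q.len
  then h.choose else ⟨θ, 1⟩

/-- The dyadic hyperbolic distance `β_θ` associated with the grid `𝒟(θ)`. -/
def dyadBeta (θ : ℝ) (z ζ : ℂ) : ℝ :=
  Real.logb 2
    ((minCover θ (topArc θ z) (topArc θ ζ)).len / min (topArc θ z).len (topArc θ ζ).len)

/-- The pseudo-hyperbolic distance on the unit disc. -/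
def pseudoHyp (z ζ : ℂ) : ℝ := ‖(ζ - z) / (1 - (starRingEnd ℂ) ζ * z)‖

/-- The hyperbolic metric `β` on the unit disc. -/
def hypDist (z ζ : ℂ) : ℝ :=
  (1 / 2) * Real.log ((1 + pseudoHyp z ζ ^ 2) / (1 - pseudoHyp z ζ ^ 2))

end


lemma circlePoint_add_int (t : ℝ) (n : ℤ) : circlePoint (t + n) = circlePoint t := by
  unfold circlePoint
  rw [show (2 * Real.pi * (↑(t + (n:ℝ))) * Complex.I : ℂ)
        = 2 * Real.pi * t * Complex.I + n * (2 * Real.pi * Complex.I) by push_cast; ring,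
    Complex.exp_add, Complex.exp_int_mul_two_pi_mul_I, mul_one]

/-- for an arc `I` with `2^{-N} ≤ |I| < 2^{-N+1}` and `2 ≤ k ≤ N`, the measure
of the set of `θ ∈ [0,1]` for which the smallest arc of `𝒟(θ)` containing `I` has length
exactly `2^{k-N}` is at most `C · 2^{-k}`, with `C` universal. -/
theorem stmt_9 :
    ∃ C > (0 : ℝ), ∀ I : Arc, 0 < I.len → I.len ≤ 1 →
      ∀ N : ℕ, (2 : ℝ) ^ (-(N : ℤ)) ≤ I.len → I.len < (2 : ℝ) ^ (-(N : ℤ) + 1) →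
      ∀ k : ℕ, 2 ≤ k → k ≤ N →
        volume {θ : ℝ | θ ∈ Set.Icc (0 : ℝ) 1 ∧
            ∃ P ∈ gridArcs θ, arcSub I P ∧
              (∀ Q ∈ gridArcs θ, arcSub I Q → P.len ≤ Q.len) ∧
              P.len = (2 : ℝ) ^ ((k : ℤ) - (N : ℤ))} ≤
          ENNReal.ofReal (C * (2 : ℝ) ^ (-(k : ℤ))) := by
  refine ⟨8, by norm_num, ?_⟩
  intro I hL0 hL1 N hlow hup k hk2 hkN
  set s := I.start with hs
  set L := I.len with hL
  set m : ℕ := N - k + 1 with hm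
  have hmZ : (m : ℤ) = (N : ℤ) - k + 1 := by
    rw [hm]; push_cast [Nat.cast_sub hkN]; ring
  clear_value m
  set δ : ℝ := ((2 : ℝ) ^ m)⁻¹ with hδ
  have hδ0 : (0 : ℝ) < δ := by positivity
  have hδeq : δ = (2 : ℝ) ^ (-(m : ℤ)) := by
    rw [hδ, zpow_neg, zpow_natCast]
  have hLδ : L ≤ δ := by
    have h1 : (2 : ℝ) ^ (-(N : ℤ) + 1) ≤ (2 : ℝ) ^ (-(m : ℤ)) := by
      apply zpow_le_zpow_right₀ (by norm_num)
      rw [hmZ]; omega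
    rw [hδeq]
    exact le_trans hup.le h1
  set a : ℤ := ⌊(s - 1) / δ⌋ with ha
  -- Step 1 : inclusion in a finite union of intervals
  have hincl : {θ : ℝ | θ ∈ Set.Icc (0 : ℝ) 1 ∧
      ∃ P ∈ gridArcs θ, arcSub I P ∧
        (∀ Q ∈ gridArcs θ, arcSub I Q → P.len ≤ Q.len) ∧
        P.len = (2 : ℝ) ^ ((k : ℤ) - (N : ℤ))} ⊆
      ⋃ j ∈ (Finset.Icc (a + 1) (a + 2 ^ m + 1) : Finset ℤ),
        Set.Ioo (s - j * δ) (s - j * δ + L) := by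
    rintro θ ⟨⟨hθ0, hθ1⟩, P, hPgrid, hPsub, hPmin, hPlen⟩
    -- first: show some grid point of generation m lies strictly inside (s, s+L)
    have key : ∃ j : ℤ, s < θ + j * δ ∧ θ + j * δ < s + L := by
      by_contra hcon
      push_neg at hcon
      set j0 : ℤ := ⌊(s - θ) / δ⌋ with hj0
      have hfl : (j0 : ℝ) * δ ≤ s - θ := by
        have h := Int.floor_le ((s - θ) / δ)
        calc (j0 : ℝ) * δ ≤ ((s - θ) / δ) * δ :=
              mul_le_mul_of_nonneg_right h hδ0.le
          _ = s - θ := by field_simp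
      have hfl2 : s - θ < ((j0 : ℝ) + 1) * δ := by
        have := Int.lt_floor_add_one ((s - θ) / δ)
        calc s - θ = (s - θ) / δ * δ := by field_simp
          _ < ((j0 : ℝ) + 1) * δ := by
              apply mul_lt_mul_of_pos_right _ hδ0
              push_cast
              exact this
      have hgt : s < θ + ((j0 : ℤ) + 1) * δ := by push_cast; linarith
      have hge : s + L ≤ θ + ((j0 : ℤ) + 1) * δ := by
        have := hcon (j0 + 1)
        push_cast at this ⊢
        by_contra hlt
        push_neg at hlt
        exact absurd (this (by push_cast at hgt; linarith)) (by linarith)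
      -- build the covering grid arc of generation m
      have h2m : (0 : ℤ) < 2 ^ m := by positivity
      set jidx : ℕ := (j0 % 2 ^ m).toNat with hjidx
      have hmod0 : (0 : ℤ) ≤ j0 % 2 ^ m := Int.emod_nonneg _ (ne_of_gt h2m)
      have hmodlt : j0 % 2 ^ m < 2 ^ m := Int.emod_lt_of_pos _ h2m
      have hjidxZ : (jidx : ℤ) = j0 % 2 ^ m := Int.toNat_of_nonneg hmod0
      have hjidxlt : jidx < 2 ^ m := by
        have : ((jidx : ℤ)) < ((2 ^ m : ℕ) : ℤ) := by push_cast; omega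
        exact_mod_cast this
      set n : ℤ := -(j0 / 2 ^ m) with hn
      have hqid : θ + (jidx : ℝ) * δ = θ + (j0 : ℝ) * δ + (n : ℝ) := by
        have hdecomp : (jidx : ℤ) = j0 - 2 ^ m * (j0 / 2 ^ m) := by
          rw [hjidxZ, Int.emod_def]
        have h2mδ : ((2 : ℝ) ^ m) * δ = 1 := by
          rw [hδ]; field_simp
        have : ((jidx : ℝ)) = (j0 : ℝ) - 2 ^ m * ((j0 / 2 ^ m : ℤ) : ℝ) := by
          exact_mod_cast congrArg (Int.cast : ℤ → ℝ) hdecomp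
        rw [this, hn]
        push_cast
        linear_combination (-((j0 / 2 ^ m : ℤ) : ℝ)) * h2mδ
      set Q : Arc := ⟨θ + (jidx : ℝ) / 2 ^ m, 1 / 2 ^ m⟩ with hQ
      have hQgrid : Q ∈ gridArcs θ := ⟨m, jidx, hjidxlt, rfl⟩
      have hQsub : arcSub I Q := by
        rintro w ⟨t, ht1, ht2, hw⟩
        refine ⟨t + n, ?_, ?_, ?_⟩
        · show θ + (jidx : ℝ) / 2 ^ m ≤ t + n
          have : θ + (jidx : ℝ) / 2 ^ m = θ + (jidx : ℝ) * δ := by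
            rw [hδ]; ring
          rw [this, hqid]
          push_cast at hfl ⊢
          linarith
        · show t + n < θ + (jidx : ℝ) / 2 ^ m + (1 / 2 ^ m : ℝ)
          have h1 : θ + (jidx : ℝ) / 2 ^ m + (1 / 2 ^ m : ℝ)
              = θ + (jidx : ℝ) * δ + δ := by rw [hδ]; ring
          rw [h1, hqid]
          push_cast at hge ⊢
          linarith
        · rw [hw, circlePoint_add_int]
      have hle := hPmin Q hQgrid hQsub
      have hQlen : Q.len = δ := by rw [hQ, hδ]; norm_num
      rw [hPlen, hQlen, hδeq] at hle
      have : ((k : ℤ) - N : ℤ) ≤ -(m : ℤ) := by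
        have := (zpow_le_zpow_iff_right₀ (by norm_num : (1:ℝ) < 2)).mp hle
        exact this
      omega
    obtain ⟨j, hj1, hj2⟩ := key
    have hjlo : a + 1 ≤ j := by
      have h1 : s - 1 < (j : ℝ) * δ := by linarith
      have h2 : (s - 1) / δ < (j : ℝ) := by
        rw [div_lt_iff₀ hδ0]; linarith
      have h3 : (a : ℝ) ≤ (s - 1) / δ := Int.floor_le _
      have : (a : ℝ) < (j : ℝ) := lt_of_le_of_lt h3 h2
      exact_mod_cast Int.add_one_le_of_lt (by exact_mod_cast this)
    have hjhi : j ≤ a + 2 ^ m + 1 := by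
      have h1 : (j : ℝ) * δ < s + L := by linarith
      have h2 : (j : ℝ) < (s + L) / δ := by
        rw [lt_div_iff₀ hδ0]; linarith
      have h3 : (s + L) / δ ≤ (s - 1) / δ + (1 + L) / δ := by
        rw [← add_div, div_le_div_iff_of_pos_right hδ0]; linarith
      have h4 : (1 + L) / δ ≤ 2 ^ m + 1 := by
        rw [div_le_iff₀ hδ0]
        have h2mδ : ((2 : ℝ) ^ m) * δ = 1 := by rw [hδ]; field_simp
        nlinarith [hLδ]
      have h5 : (s - 1) / δ < (a : ℝ) + 1 := Int.lt_floor_add_one _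
      have : (j : ℝ) < (a : ℝ) + 2 ^ m + 2 := by linarith
      have : j < a + 2 ^ m + 2 := by exact_mod_cast this
      omega
    exact Set.mem_biUnion (Finset.mem_Icc.mpr ⟨hjlo, hjhi⟩)
      ⟨by linarith, by linarith⟩
  -- Step 2 : measure estimate
  refine le_trans (measure_mono hincl) ?_
  refine le_trans (measure_biUnion_finset_le _ _) ?_
  have hvol : ∀ j : ℤ, volume (Set.Ioo (s - j * δ) (s - j * δ + L))
      = ENNReal.ofReal L := by
    intro j; rw [Real.volume_Ioo]; congr 1; ring
  calc (∑ j ∈ (Finset.Icc (a + 1) (a + 2 ^ m + 1) : Finset ℤ),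
        volume (Set.Ioo (s - j * δ) (s - j * δ + L)))
      = (Finset.Icc (a + 1) (a + 2 ^ m + 1)).card • ENNReal.ofReal L := by
        rw [Finset.sum_congr rfl (fun j _ => hvol j), Finset.sum_const]
    _ = ((2 ^ m + 1 : ℕ) : ℝ≥0∞) * ENNReal.ofReal L := by
        rw [Int.card_Icc,
          show (a + 2 ^ m + 1 + 1 - (a + 1) : ℤ) = ((2 ^ m + 1 : ℕ) : ℤ) by
            push_cast; ring,
          Int.toNat_natCast, nsmul_eq_mul]
    _ = ENNReal.ofReal ((2 ^ m + 1 : ℕ) * L) := by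
        rw [ENNReal.ofReal_mul (by positivity)]
        congr 1
        rw [ENNReal.ofReal_natCast]
    _ ≤ ENNReal.ofReal (8 * (2 : ℝ) ^ (-(k : ℤ))) := by
        apply ENNReal.ofReal_le_ofReal
        have hcard : ((2 ^ m + 1 : ℕ) : ℝ) ≤ 2 ^ (m + 1) := by
          push_cast
          have : (1 : ℝ) ≤ 2 ^ m := one_le_pow₀ (by norm_num)
          rw [pow_succ]
          linarith
        have hL2 : L ≤ (2 : ℝ) ^ (-(N : ℤ) + 1) := hup.le
        have hfin : (2 : ℝ) ^ (m + 1) * (2 : ℝ) ^ (-(N : ℤ) + 1)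
            = 8 * (2 : ℝ) ^ (-(k : ℤ)) := by
          rw [show ((2 : ℝ) ^ (m + 1)) = (2 : ℝ) ^ ((m + 1 : ℕ) : ℤ) by
            rw [zpow_natCast], ← zpow_add₀ (by norm_num : (2:ℝ) ≠ 0),
            show (8 : ℝ) = (2 : ℝ) ^ (3 : ℤ) by norm_num,
            ← zpow_add₀ (by norm_num : (2:ℝ) ≠ 0)]
          congr 1
          push_cast [hmZ]
          ring
        calc ((2 ^ m + 1 : ℕ) : ℝ) * L ≤ 2 ^ (m + 1) * L := by
              apply mul_le_mul_of_nonneg_right hcard hL0.le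
          _ ≤ 2 ^ (m + 1) * (2 : ℝ) ^ (-(N : ℤ) + 1) := by
              apply mul_le_mul_of_nonneg_left hL2 (by positivity)
          _ = 8 * (2 : ℝ) ^ (-(k : ℤ)) := hfin
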